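/- Let 1 ≤ k < ω, 1 ≤ n ≤ ω, and f : 2^n → 2. Then the topological closure of f^{-1}(1) in 2^n has the k-ary intersection property (i.e., f ∈ Limm0kk) if and only if there exists a clopen upward-closed set A ⊆ 2^n with the k-ary intersection property such that f^{-1}(1) ⊆ A. -/
import Mathlib


open scoped Classical

/-- An arity: `some n` is the finite arity `n ≥ 1`; `none` is the countably infinite arity ω. -/
abbrev Arity := Option ℕ+

/-- The index set of an arity. -/
abbrev Idx : Arity → Type
  | some n => Fin (n : ℕ)
  | none => ℕ

/-- A Boolean function of some arity `1 ≤ n ≤ ω`.  The input space `Idx a → Bool`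
carries the product topology (with `Bool` discrete), the product σ-algebra (= Borel),
and the coordinatewise partial order. -/
abbrev BFun : Type := Σ a : Arity, (Idx a → Bool) → Bool

/-- A clone: a set of Boolean functions of arities `1 ≤ n ≤ ω` containing all projections
and closed under composition. -/
structure IsClone (F : Set BFun) : Prop where
  proj : ∀ (a : Arity) (i : Idx a), (⟨a, fun x => x i⟩ : BFun) ∈ F
  comp : ∀ (a b : Arity) (g : (Idx a → Bool) → Bool) (f : Idx a → (Idx b → Bool) → Bool),
      (⟨a, g⟩ : BFun) ∈ F → (∀ i, (⟨b, f i⟩ : BFun) ∈ F) →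
      (⟨b, fun x => g fun i => f i x⟩ : BFun) ∈ F

/-- The clone generated by a set of Boolean functions. -/
def cloneGen (G : Set BFun) : Set BFun := ⋂₀ {F : Set BFun | IsClone F ∧ G ⊆ F}

/-- `f` has finite arity. -/
def finitary (f : BFun) : Prop := f.1 ≠ none

/-- `f` is Borel: the preimage of `1` is a Borel set. -/
def IsBorelFun (f : BFun) : Prop := MeasurableSet {x | f.2 x = true}

/-- `f` is continuous (equivalently, depends on only finitely many coordinates). -/
def IsContFun (f : BFun) : Prop := Continuous f.2

/-- `f(0⃗) = 0`. -/
def PresBot (f : BFun) : Prop := f.2 (fun _ => false) = false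

/-- `f(1⃗) = 1`. -/
def PresTop (f : BFun) : Prop := f.2 (fun _ => true) = true

/-- `f` vanishes on a neighborhood of `0⃗`, i.e. `0⃗` is not in the closure of `f⁻¹(1)`. -/
def VanishNearBot (f : BFun) : Prop := (fun _ => false) ∉ closure {x | f.2 x = true}

/-- `f` equals `1` on a neighborhood of `1⃗`, i.e. `1⃗` is not in the closure of `f⁻¹(0)`. -/
def OneNearTop (f : BFun) : Prop := (fun _ => true) ∉ closure {x | f.2 x = false}

/-- Countably infinite disjunction `⋁ : 2^ω → 2`. -/
noncomputable def bigOr : (ℕ → Bool) → Bool := fun x => decide (∃ i, x i = true)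

/-- Countably infinite conjunction `⋀ : 2^ω → 2`. -/
noncomputable def bigAnd : (ℕ → Bool) → Bool := fun x => decide (∀ i, x i = true)

/-- `liminf : 2^ω → 2`, equal to `1` iff all but finitely many bits are `1`. -/
noncomputable def liminfF : (ℕ → Bool) → Bool := fun x => decide (∃ N, ∀ j, N ≤ j → x j = true)

/-- `f ∈ Limm0kt`: there do not exist `k−t` elements of `f⁻¹(1)` together with `t`
elements of the closure of `f⁻¹(1)` whose coordinatewise meet is `0⃗`. -/
def MemLimm (k t : ℕ) {a : Arity} (f : (Idx a → Bool) → Bool) : Prop :=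
  ¬ ∃ (x : Fin (k - t) → Idx a → Bool) (y : Fin t → Idx a → Bool),
      (∀ r, f (x r) = true) ∧ (∀ s, y s ∈ closure {z | f z = true}) ∧
      (∀ i : Idx a, (∃ r, x r i = false) ∨ (∃ s, y s i = false))


/-- For `1 ≤ k < ω`: the closure of `f⁻¹(1)` has the `k`-ary intersection property
(i.e. `f ∈ Limm0kk`) iff `f⁻¹(1)` is contained in some clopen upward-closed set with the
`k`-ary intersection property. -/
theorem memLimm_kk_iff_clopen_upward (k : ℕ+) (a : Arity) (f : (Idx a → Bool) → Bool) :
    MemLimm (k : ℕ) (k : ℕ) f ↔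
    ∃ A : Set (Idx a → Bool), IsClopen A ∧
      (∀ x y : Idx a → Bool, x ≤ y → x ∈ A → y ∈ A) ∧
      (∀ x : Fin (k : ℕ) → Idx a → Bool, (∀ j, x j ∈ A) → ∃ i, ∀ j, x j i = true) ∧
      {x | f x = true} ⊆ A := by
  constructor
  · intro hm
    set C := closure {z | f z = true} with hC
    have key : ∀ y : Fin (k : ℕ) → Idx a → Bool, (∀ s, y s ∈ C) → ∃ i, ∀ s, y s i = true := by
      intro y hy
      by_contra h
      push_neg at h
      simp only [Bool.not_eq_true] at h
      apply hm
      refine ⟨fun r => y 0, y, fun r => absurd r.isLt (by omega), hy, fun i => Or.inr (h i)⟩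
    have hKeq : {t : Fin (k : ℕ) → Idx a → Bool | ∀ s, t s ∈ C} = ⋂ s, (fun t => t s) ⁻¹' C := by
      ext t; simp
    have hK : IsCompact {t : Fin (k : ℕ) → Idx a → Bool | ∀ s, t s ∈ C} := by
      rw [hKeq]
      exact (isClosed_iInter fun s => isClosed_closure.preimage (continuous_apply s)).isCompact
    have hUopen : ∀ i : Idx a, IsOpen {t : Fin (k : ℕ) → Idx a → Bool | ∀ s, t s i = true} := by
      intro i
      have : {t : Fin (k : ℕ) → Idx a → Bool | ∀ s, t s i = true}
          = ⋂ s, (fun t : Fin (k : ℕ) → Idx a → Bool => t s i) ⁻¹' {true} := by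
        ext t; simp
      rw [this]
      exact isOpen_iInter_of_finite fun s =>
        (isOpen_discrete _).preimage ((continuous_apply i).comp (continuous_apply s))
    obtain ⟨I, hI⟩ := hK.elim_finite_subcover
      (fun i : Idx a => {t : Fin (k : ℕ) → Idx a → Bool | ∀ s, t s i = true}) hUopen
      (by intro t ht; simpa using key t ht)
    refine ⟨{x | ∃ c ∈ C, ∀ i ∈ I, c i = true → x i = true}, ?_, ?_, ?_, ?_⟩
    · have heq : {x : Idx a → Bool | ∃ c ∈ C, ∀ i ∈ I, c i = true → x i = true}
          = (fun (x : Idx a → Bool) (i : I) => x i) ⁻¹'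
            {v | ∃ c ∈ C, ∀ i : I, c i = true → v i = true} := by
        ext x
        simp only [Set.mem_setOf_eq, Set.mem_preimage]
        constructor
        · rintro ⟨c, hc, hci⟩
          exact ⟨c, hc, fun i => hci i i.2⟩
        · rintro ⟨c, hc, hci⟩
          exact ⟨c, hc, fun i hi => hci ⟨i, hi⟩⟩
      rw [heq]
      exact (isClopen_discrete _).preimage (continuous_pi fun i => continuous_apply (i : Idx a))
    · rintro x y hxy ⟨c, hc, hci⟩
      refine ⟨c, hc, fun i hi hct => ?_⟩
      have h1 := hxy i
      rw [hci i hi hct] at h1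
      exact (le_antisymm h1 (Bool.le_true _)).symm
    · intro x hx
      choose c hcC hci using hx
      have hmem := hI (show (fun j => c j) ∈ _ from fun s => hcC s)
      simp only [Set.mem_iUnion, Set.mem_setOf_eq] at hmem
      obtain ⟨i, hiI, hti⟩ := hmem
      exact ⟨i, fun j => hci j i hiI (hti j)⟩
    · intro x hx
      exact ⟨x, subset_closure hx, fun i _ h => h⟩
  · rintro ⟨A, hAc, hAup, hAip, hAsub⟩
    rintro ⟨x, y, hx, hy, hmeet⟩
    have hyA : ∀ s, y s ∈ A := fun s => closure_minimal hAsub hAc.isClosed (hy s)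
    obtain ⟨i, hi⟩ := hAip y hyA
    rcases hmeet i with ⟨r, _⟩ | ⟨s, hs⟩
    · exact absurd r.isLt (by omega)
    · simp [hi s] at hs
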